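/- Let f(x) = w^{L⊤} W^{L−1} ⋯ W^1 x be a deep linear network whose weights are exactly balanced rank one: w^L = u r_L and W^ℓ = u r_{ℓ+1} r_ℓᵀ for unit vectors r_1, …, r_L and a scalar u > 0. Then its neural tangent kernel K(x,x') = Σ_{ℓ=1}^L ⟨∂f(x)/∂W^ℓ, ∂f(x')/∂W^ℓ⟩ (with W^L := w^L) equals K(x,x') = u^{2L−2} xᵀ [ (L−1) r_1 r_1ᵀ + I ] x'. -/

import Mathlib

open Matrix

namespace DeepLinear

variable (n : ℕ → ℕ) (L : ℕ)

/-- Forward pass (layer-`k` activation) of a deep linear network given by the chain of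
matrices `W ℓ : ℝ^{n(ℓ+1) × n(ℓ)}`, `ℓ = 0, …, L-1`. -/
def fwd (W : ∀ ℓ : Fin L, Matrix (Fin (n (ℓ + 1))) (Fin (n ℓ)) ℝ)
    (x : Fin (n 0) → ℝ) : (k : ℕ) → k ≤ L → (Fin (n k) → ℝ)
  | 0, _ => x
  | k + 1, hk => W ⟨k, hk⟩ *ᵥ fwd W x k (Nat.le_of_succ_le hk)

/-- Auxiliary downward recursion for the backward pass. -/
def bwdAux (W : ∀ ℓ : Fin L, Matrix (Fin (n (ℓ + 1))) (Fin (n ℓ)) ℝ)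
    (v : Fin (n L) → ℝ) : (m k : ℕ) → k + m = L → (Fin (n k) → ℝ)
  | 0, k, h => fun i => v (Fin.cast (congrArg n h) i)
  | m + 1, k, h => (W ⟨k, by omega⟩)ᵀ *ᵥ bwdAux W v m (k + 1) (by omega)

/-- Backward pass: `(W^{L-1} ⋯ W^k)ᵀ v`. -/
def bwd (W : ∀ ℓ : Fin L, Matrix (Fin (n (ℓ + 1))) (Fin (n ℓ)) ℝ)
    (v : Fin (n L) → ℝ) (k : ℕ) (hk : k ≤ L) : Fin (n k) → ℝ :=
  bwdAux n L W v (L - k) k (by omega)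

/-- Gradient of the scalar network output (the network has a single output unit, `n L = 1`)
with respect to the layer-`ℓ` weight matrix. -/
def netGrad (W : ∀ ℓ : Fin L, Matrix (Fin (n (ℓ + 1))) (Fin (n ℓ)) ℝ)
    (x : Fin (n 0) → ℝ) (ℓ : Fin L) : Matrix (Fin (n (ℓ + 1))) (Fin (n ℓ)) ℝ :=
  vecMulVec (bwd n L W (fun _ => 1) (ℓ + 1) ℓ.isLt)
    (fwd n L W x ℓ (le_of_lt ℓ.isLt))

/-- The neural tangent kernel of the deep linear network: the sum over layers of the
Frobenius inner products of the per-layer gradients of the (scalar) output. -/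
def NTK (W : ∀ ℓ : Fin L, Matrix (Fin (n (ℓ + 1))) (Fin (n ℓ)) ℝ)
    (x x' : Fin (n 0) → ℝ) : ℝ :=
  ∑ ℓ : Fin L, ∑ i, ∑ j, netGrad n L W x ℓ i j * netGrad n L W x' ℓ i j

end DeepLinear

open DeepLinear

/-- The Euclidean (ℓ²) norm of a vector. -/
noncomputable def euclNorm {m : ℕ} (v : Fin m → ℝ) : ℝ :=
  Real.sqrt (∑ i, v i ^ 2)

/-!
Each layer gradient is the outer product of a backward and a forward vector. For balanced
rank-one weights both are multiples of the unit vectors `r k`: the forward activation at layer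
`k ≥ 1` is `u^k (r₀ᵀx) r_k` and the backward vector at layer `k` is `± u^{L-k} r_k`. Hence layer
`ℓ` contributes `u^{2(L-1-ℓ)}` times the inner product of the forward activations, that is
`u^{2L-2} xᵀx'` for the input layer and `u^{2L-2} (r₀ᵀx)(r₀ᵀx')` for each of the `L-1` others.
-/

lemma euclNorm_eq_one_iff {m : ℕ} (v : Fin m → ℝ) : euclNorm v = 1 ↔ v ⬝ᵥ v = 1 := by
  simp only [euclNorm, Real.sqrt_eq_one, dotProduct, sq]

namespace Matrix

variable {α m n : Type*}

lemma smul_vecMulVec_mulVec [CommSemiring α] [Fintype n] (c : α) (a : m → α) (b v : n → α) :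
    (c • vecMulVec a b) *ᵥ v = (c * (b ⬝ᵥ v)) • a := by
  rw [smul_mulVec, vecMulVec_mulVec, op_smul_eq_smul, smul_smul]

lemma sum_sum_vecMulVec_mul_vecMulVec [CommSemiring α] [Fintype m] [Fintype n]
    (a a' : m → α) (b b' : n → α) :
    ∑ i, ∑ j, vecMulVec a b i j * vecMulVec a' b' i j = (a ⬝ᵥ a') * (b ⬝ᵥ b') := by
  simp only [dotProduct, Finset.sum_mul_sum, vecMulVec_apply]
  exact Fintype.sum_congr _ _ fun i => Fintype.sum_congr _ _ fun j => by ring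

lemma const_one_eq_smul_self [Semiring α] [Fintype m] [Unique m] (v : m → α) (hv : v ⬝ᵥ v = 1) :
    (fun _ => 1) = v default • v := by
  funext i
  rw [Unique.eq_default i, Pi.smul_apply, smul_eq_mul, ← hv, dotProduct, Fintype.sum_unique]

end Matrix

namespace DeepLinear

lemma sum_sum_netGrad_mul_netGrad (n : ℕ → ℕ) (L : ℕ)
    (W : ∀ ℓ : Fin L, Matrix (Fin (n (ℓ + 1))) (Fin (n ℓ)) ℝ) (x x' : Fin (n 0) → ℝ)
    (ℓ : Fin L) :
    ∑ i, ∑ j, netGrad n L W x ℓ i j * netGrad n L W x' ℓ i j =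
      (bwd n L W (fun _ => 1) (ℓ + 1) ℓ.isLt ⬝ᵥ bwd n L W (fun _ => 1) (ℓ + 1) ℓ.isLt) *
        (fwd n L W x ℓ ℓ.isLt.le ⬝ᵥ fwd n L W x' ℓ ℓ.isLt.le) :=
  sum_sum_vecMulVec_mul_vecMulVec _ _ _ _

section BalancedRankOne

variable {n : ℕ → ℕ} {L : ℕ} {u : ℝ} {r : (k : ℕ) → Fin (n k) → ℝ}
  {W : ∀ ℓ : Fin L, Matrix (Fin (n (ℓ + 1))) (Fin (n ℓ)) ℝ}
  (hW : ∀ ℓ : Fin L, W ℓ = u • vecMulVec (r (ℓ + 1)) (r ℓ)) (hr : ∀ k ≤ L, r k ⬝ᵥ r k = 1)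
include hW hr

lemma fwd_succ_eq_smul (y : Fin (n 0) → ℝ) (k : ℕ) (hk : k + 1 ≤ L) :
    fwd n L W y (k + 1) hk = (u ^ (k + 1) * (r 0 ⬝ᵥ y)) • r (k + 1) := by
  induction k with
  | zero => simp [fwd, hW, smul_vecMulVec_mulVec]
  | succ k ih =>
    rw [fwd, ih (by omega), hW, mulVec_smul, smul_vecMulVec_mulVec, smul_smul,
      hr (k + 1) (by omega)]
    congr 1
    ring

lemma bwdAux_smul_eq_smul (c : ℝ) (m k : ℕ) (h : k + m = L) :
    bwdAux n L W (c • r L) m k h = (c * u ^ m) • r k := by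
  induction m generalizing k with
  | zero => subst h; funext i; simp [bwdAux]
  | succ m ih =>
    rw [bwdAux, ih (k + 1) (by omega), hW, mulVec_smul, transpose_smul, transpose_vecMulVec,
      smul_vecMulVec_mulVec, smul_smul, hr (k + 1) (by omega)]
    congr 1
    ring

lemma bwd_dotProduct_self [Unique (Fin (n L))] (k : ℕ) (hk : k ≤ L) :
    bwd n L W (fun _ => 1) k hk ⬝ᵥ bwd n L W (fun _ => 1) k hk = u ^ (2 * (L - k)) := by
  have hsign : r L default * r L default = 1 := by
    simpa [dotProduct, Fintype.sum_unique] using hr L le_rfl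
  rw [bwd, const_one_eq_smul_self (r L) (hr L le_rfl), bwdAux_smul_eq_smul hW hr,
    smul_dotProduct, dotProduct_smul, hr k hk, smul_eq_mul, smul_eq_mul]
  linear_combination (u ^ (L - k)) ^ 2 * hsign

lemma sum_sum_netGrad_mul_netGrad_of_val_eq_zero [Unique (Fin (n L))] (x x' : Fin (n 0) → ℝ)
    (ℓ : Fin L) (hℓ : (ℓ : ℕ) = 0) :
    ∑ i, ∑ j, netGrad n L W x ℓ i j * netGrad n L W x' ℓ i j = u ^ (2 * L - 2) * (x ⬝ᵥ x') := by
  obtain ⟨ℓ, hℓL⟩ := ℓ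
  subst hℓ
  rw [sum_sum_netGrad_mul_netGrad, bwd_dotProduct_self hW hr]
  congr 2
  dsimp only
  omega

lemma sum_sum_netGrad_mul_netGrad_of_val_eq_succ [Unique (Fin (n L))] (x x' : Fin (n 0) → ℝ)
    (ℓ : Fin L) (k : ℕ) (hℓ : (ℓ : ℕ) = k + 1) :
    ∑ i, ∑ j, netGrad n L W x ℓ i j * netGrad n L W x' ℓ i j =
      u ^ (2 * L - 2) * ((r 0 ⬝ᵥ x) * (r 0 ⬝ᵥ x')) := by
  obtain ⟨ℓ, hℓL⟩ := ℓ
  subst hℓ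
  rw [sum_sum_netGrad_mul_netGrad, bwd_dotProduct_self hW hr, fwd_succ_eq_smul hW hr x,
    fwd_succ_eq_smul hW hr x', smul_dotProduct, dotProduct_smul, hr (k + 1) hℓL.le,
    show 2 * L - 2 = 2 * (L - (k + 1 + 1)) + 2 * (k + 1) by omega]
  simp only [smul_eq_mul]
  ring

end BalancedRankOne

end DeepLinear

theorem stmt10_general {L : ℕ} (hL : 0 < L) (n : ℕ → ℕ) (htop : n L = 1)
    (u : ℝ)
    (r : (k : ℕ) → Fin (n k) → ℝ)
    (hr : ∀ k ≤ L, euclNorm (r k) = 1)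
    (W : ∀ ℓ : Fin L, Matrix (Fin (n (ℓ + 1))) (Fin (n ℓ)) ℝ)
    (hW : ∀ ℓ : Fin L, W ℓ = u • vecMulVec (r (ℓ + 1)) (r ℓ)) :
    ∀ x x' : Fin (n 0) → ℝ,
      NTK n L W x x' =
        u ^ (2 * L - 2) * (((L : ℝ) - 1) * (r 0 ⬝ᵥ x) * (r 0 ⬝ᵥ x') + x ⬝ᵥ x') := by
  intro x x'
  have hunit : ∀ k ≤ L, r k ⬝ᵥ r k = 1 := fun k hk => (euclNorm_eq_one_iff _).1 (hr k hk)
  have : Unique (Fin (n L)) := htop ▸ Fin.instUnique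
  obtain ⟨M, rfl⟩ : ∃ M, L = M + 1 := ⟨L - 1, by omega⟩
  rw [NTK, Fin.sum_univ_succ, sum_sum_netGrad_mul_netGrad_of_val_eq_zero hW hunit x x' 0 rfl,
    Finset.sum_congr rfl fun (i : Fin M) _ =>
      sum_sum_netGrad_mul_netGrad_of_val_eq_succ hW hunit x x' i.succ i rfl,
    Finset.sum_const, Finset.card_univ, Fintype.card_fin, nsmul_eq_mul]
  push_cast
  ring

/-- For a deep linear network (encoded as a chain of `L` matrices, the last of
which is the row `w^{L⊤}`, so `n L = 1`) whose weights are exactly balanced rank one,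
`W^ℓ = u r_{ℓ+1} r_ℓᵀ` for unit vectors `r_k` and `u > 0`, the neural tangent kernel equals
`K(x,x') = u^{2L-2} xᵀ[(L-1) r_1 r_1ᵀ + I]x'`. -/
theorem stmt10 {L : ℕ} (hL : 0 < L) (n : ℕ → ℕ) (htop : n L = 1)
    (u : ℝ) (hu : 0 < u)
    (r : (k : ℕ) → Fin (n k) → ℝ)
    (hr : ∀ k ≤ L, euclNorm (r k) = 1)
    (W : ∀ ℓ : Fin L, Matrix (Fin (n (ℓ + 1))) (Fin (n ℓ)) ℝ)
    (hW : ∀ ℓ : Fin L, W ℓ = u • vecMulVec (r (ℓ + 1)) (r ℓ)) :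
    ∀ x x' : Fin (n 0) → ℝ,
      NTK n L W x x' =
        u ^ (2 * L - 2) * (((L : ℝ) - 1) * (r 0 ⬝ᵥ x) * (r 0 ⬝ᵥ x') + x ⬝ᵥ x') :=
  stmt10_general hL n htop u r hr W hW
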